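/- Fix integers q ≥ 1 and p. In the E-cochain setup (families of abelian groups S n and Y n with every element of Y n 2-torsion, additive differentials d_S : S n →+ S (n+1) and d_Y : Y n →+ Y (n+1) with d_S ∘ d_S = 0 and d_Y ∘ d_Y = 0, and biadditive higher cup products ∪ᵢ : Y a → Y b → S (a+b−i), zero for i < 0, with 2-torsion values, satisfying the Steenrod relation d_S(u ∪ᵢ v) = (d_Y u) ∪ᵢ v + u ∪ᵢ (d_Y v) + u ∪_{i−1} v + v ∪_{i−1} u), let ν ∈ Y (q+1) satisfy d_Y ν = 0. Equip each C̄^n := S n × Y (n−q) with the group law (s₁,y₁) ⊞ (s₂,y₂) := (s₁ + s₂ + (d_Y y₁) ∪_{n−2q+1} y₂ + y₁ ∪_{n−2q} y₂, y₁ + y₂), and define the twisted differential d : C̄^n → C̄^{n+1} by d(s,y) := (d_S s + y ∪_{n−2q} (d_Y y) + y ∪_{n−2q−1} y + y ∪₀ ν, d_Y y). Then: (1) d : C̄^p → C̄^{p+1} is a group homomorphism with respect to ⊞; (2) d ∘ d = 0 as a map C̄^p → C̄^{p+2}; (3) for every z ∈ C̄^p with d z = 0 and every r ∈ C̄^{p−1},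 there exists r' ∈ C̄^{p−1} with z ⊞ d r = (d r') ⊞ z; hence the image of d : C̄^{p−1} → C̄^p is a normal subgroup of the kernel of d : C̄^p → C̄^{p+1}. -/
import Mathlib


/-- The E-cochain sum `⊞` on `C̄^p = S p × Y (p - q)`. -/
def eBoxplus (q : ℤ) {S Y : ℤ → Type*} [∀ n, AddCommGroup (S n)] [∀ n, AddCommGroup (Y n)]
    (dY : ∀ a b : ℤ, a + 1 = b → Y a →+ Y b)
    (cup : ∀ i a b c : ℤ, a + b - i = c → Y a → Y b → S c)
    (p : ℤ) (x₁ x₂ : S p × Y (p - q)) : S p × Y (p - q) :=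
  (x₁.1 + x₂.1
      + cup (p - 2 * q + 1) (p - q + 1) (p - q) p (by ring) (dY (p - q) (p - q + 1) rfl x₁.2) x₂.2
      + cup (p - 2 * q) (p - q) (p - q) p (by ring) x₁.2 x₂.2,
    x₁.2 + x₂.2)

/-- The twisted E-theory differential `d : C̄^n → C̄^m` (with `m = n + 1`) associated to a Wu
cocycle `ν ∈ Y (q+1)`:
`d (s, y) = (d_S s + y ∪_{n-2q} (d_Y y) + y ∪_{n-2q-1} y + y ∪₀ ν, d_Y y)`. -/
def eDiffTw (q : ℤ) {S Y : ℤ → Type*} [∀ n, AddCommGroup (S n)] [∀ n, AddCommGroup (Y n)]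
    (dS : ∀ a b : ℤ, a + 1 = b → S a →+ S b)
    (dY : ∀ a b : ℤ, a + 1 = b → Y a →+ Y b)
    (cup : ∀ i a b c : ℤ, a + b - i = c → Y a → Y b → S c)
    (ν : Y (q + 1))
    (n m : ℤ) (h : n + 1 = m) (x : S n × Y (n - q)) : S m × Y (m - q) :=
  (dS n m h x.1
      + cup (n - 2 * q) (n - q) (n - q + 1) m (by omega) x.2 (dY (n - q) (n - q + 1) rfl x.2)
      + cup (n - 2 * q - 1) (n - q) (n - q) m (by omega) x.2 x.2
      + cup 0 (n - q) (q + 1) m (by omega) x.2 ν,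
    dY (n - q) (m - q) (by omega) x.2)


/-- Auxiliary: cast lemma for the cup product along equalities of indices/degrees. -/
lemma cupCastAux {S Y : ℤ → Type*}
    (cup : ∀ i a b c : ℤ, a + b - i = c → Y a → Y b → S c)
    {i i' a a' b b' c : ℤ} (ei : i = i') (ea : a = a') (eb : b = b')
    (h : a + b - i = c) (h' : a' + b' - i' = c)
    (u : Y a) (u' : Y a') (v : Y b) (v' : Y b')
    (hu : HEq u u') (hv : HEq v v') :
    cup i a b c h u v = cup i' a' b' c h' u' v' := by
  subst ei ea eb
  rw [eq_of_heq hu, eq_of_heq hv]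

/-- Auxiliary: cast lemma for the differential on `Y`. -/
lemma dYCastAux {Y : ℤ → Type*} [∀ n, AddCommGroup (Y n)]
    (dY : ∀ a b : ℤ, a + 1 = b → Y a →+ Y b)
    {a b b' : ℤ} (e : b = b') (h : a + 1 = b) (h' : a + 1 = b') (y : Y a) :
    HEq (dY a b h y) (dY a b' h' y) := by
  subst e; rfl

/-- Auxiliary: vanishing of a cast of `dY y`. -/
lemma dYZeroCastAux {Y : ℤ → Type*} [∀ n, AddCommGroup (Y n)]
    (dY : ∀ a b : ℤ, a + 1 = b → Y a →+ Y b)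
    {a b b' : ℤ} (e : b = b') (h : a + 1 = b) (h' : a + 1 = b') (y : Y a)
    (hy : dY a b h y = 0) : dY a b' h' y = 0 := by
  subst e; exact hy

/-- In the E-cochain model with a closed twist `ν ∈ Y (q+1)`: (1) the twisted differential `d`
is a group homomorphism for `⊞`; (2) `d ∘ d = 0`; (3) for every twisted cocycle `z` of degree `p`
and every `(p-1)`-cochain `r` there is a `(p-1)`-cochain `r'` with `z ⊞ d r = (d r') ⊞ z`;
hence exact twisted E-cochains form a normal subgroup of the group of twisted E-cocycles. -/
theorem stmt18 (q p : ℤ) (hq : 1 ≤ q)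
    {S Y : ℤ → Type*} [∀ n, AddCommGroup (S n)] [∀ n, AddCommGroup (Y n)]
    (hY2 : ∀ (n : ℤ) (y : Y n), y + y = 0)
    (dS : ∀ a b : ℤ, a + 1 = b → S a →+ S b)
    (dY : ∀ a b : ℤ, a + 1 = b → Y a →+ Y b)
    (hdS2 : ∀ (a b c : ℤ) (h : a + 1 = b) (h' : b + 1 = c) (s : S a), dS b c h' (dS a b h s) = 0)
    (hdY2 : ∀ (a b c : ℤ) (h : a + 1 = b) (h' : b + 1 = c) (y : Y a), dY b c h' (dY a b h y) = 0)
    (cup : ∀ i a b c : ℤ, a + b - i = c → Y a → Y b → S c)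
    (hcupl : ∀ (i a b c : ℤ) (h : a + b - i = c) (u u' : Y a) (v : Y b),
      cup i a b c h (u + u') v = cup i a b c h u v + cup i a b c h u' v)
    (hcupr : ∀ (i a b c : ℤ) (h : a + b - i = c) (u : Y a) (v v' : Y b),
      cup i a b c h u (v + v') = cup i a b c h u v + cup i a b c h u v')
    (hcupneg : ∀ (i a b c : ℤ) (h : a + b - i = c) (u : Y a) (v : Y b),
      i < 0 → cup i a b c h u v = 0)
    (hcup2 : ∀ (i a b c : ℤ) (h : a + b - i = c) (u : Y a) (v : Y b),
      cup i a b c h u v + cup i a b c h u v = 0)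
    (hsteenrod : ∀ (i a b c c' : ℤ) (h : a + b - i = c) (hc : c + 1 = c') (u : Y a) (v : Y b),
      dS c c' hc (cup i a b c h u v) =
        cup i (a + 1) b c' (by omega) (dY a (a + 1) rfl u) v
          + cup i a (b + 1) c' (by omega) u (dY b (b + 1) rfl v)
          + cup (i - 1) a b c' (by omega) u v
          + cup (i - 1) b a c' (by omega) v u)
    (ν : Y (q + 1)) (hν : dY (q + 1) (q + 2) (by ring) ν = 0) :
    (∀ x₁ x₂ : S p × Y (p - q),
      eDiffTw q dS dY cup ν p (p + 1) rfl (eBoxplus q dY cup p x₁ x₂)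
        = eBoxplus q dY cup (p + 1)
            (eDiffTw q dS dY cup ν p (p + 1) rfl x₁) (eDiffTw q dS dY cup ν p (p + 1) rfl x₂)) ∧
    (∀ x : S p × Y (p - q),
      eDiffTw q dS dY cup ν (p + 1) (p + 2) (by ring) (eDiffTw q dS dY cup ν p (p + 1) rfl x)
        = 0) ∧
    (∀ z : S p × Y (p - q), eDiffTw q dS dY cup ν p (p + 1) rfl z = 0 →
      ∀ r : S (p - 1) × Y (p - 1 - q), ∃ r' : S (p - 1) × Y (p - 1 - q),
        eBoxplus q dY cup p z (eDiffTw q dS dY cup ν (p - 1) p (by ring) r)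
          = eBoxplus q dY cup p (eDiffTw q dS dY cup ν (p - 1) p (by ring) r') z) := by
  have cup0l : ∀ (i a b c : ℤ) (h : a + b - i = c) (v : Y b), cup i a b c h 0 v = 0 := by
    intro i a b c h v
    have h0 := hcupl i a b c h 0 0 v
    rw [add_zero] at h0
    have h1 : cup i a b c h 0 v + 0 = cup i a b c h 0 v + cup i a b c h 0 v := by
      rw [add_zero]; exact h0
    exact (add_left_cancel h1).symm
  have cup0r : ∀ (i a b c : ℤ) (h : a + b - i = c) (u : Y a), cup i a b c h u 0 = 0 := by
    intro i a b c h u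
    have h0 := hcupr i a b c h u 0 0
    rw [add_zero] at h0
    have h1 : cup i a b c h u 0 + 0 = cup i a b c h u 0 + cup i a b c h u 0 := by
      rw [add_zero]; exact h0
    exact (add_left_cancel h1).symm
  refine ⟨?_, ?_, ?_⟩
  · intro x₁ x₂
    obtain ⟨s₁, y₁⟩ := x₁
    obtain ⟨s₂, y₂⟩ := x₂
    simp only [eDiffTw, eBoxplus, Prod.mk.injEq]
    refine ⟨?_, map_add _ _ _⟩
    simp only [map_add, hsteenrod, hdY2, cup0l, cup0r, hcupl, hcupr, zero_add, add_zero]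
    have e1 : cup (p - 2 * q + 1 - 1) (p - q + 1) (p - q) (p + 1) (by omega)
        (dY (p - q) (p - q + 1) rfl y₁) y₂
        = cup (p - 2 * q) (p - q + 1) (p - q) (p + 1) (by omega)
        (dY (p - q) (p - q + 1) rfl y₁) y₂ :=
      cupCastAux cup (by ring) rfl rfl _ _ _ _ _ _ HEq.rfl HEq.rfl
    have e2 : cup (p - 2 * q + 1 - 1) (p - q) (p - q + 1) (p + 1) (by omega)
        y₂ (dY (p - q) (p - q + 1) rfl y₁)
        = cup (p - 2 * q) (p - q) (p - q + 1) (p + 1) (by omega)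
        y₂ (dY (p - q) (p - q + 1) rfl y₁) :=
      cupCastAux cup (by ring) rfl rfl _ _ _ _ _ _ HEq.rfl HEq.rfl
    have e3 : cup (p + 1 - 2 * q) (p + 1 - q) (p + 1 - q) (p + 1) (by omega)
        (dY (p - q) (p + 1 - q) (by omega) y₁) (dY (p - q) (p + 1 - q) (by omega) y₂)
        = cup (p - 2 * q + 1) (p - q + 1) (p - q + 1) (p + 1) (by omega)
        (dY (p - q) (p - q + 1) rfl y₁) (dY (p - q) (p - q + 1) rfl y₂) :=
      cupCastAux cup (by ring) (by ring) (by ring) _ _ _ _ _ _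
        (dYCastAux dY (by ring) _ _ _) (dYCastAux dY (by ring) _ _ _)
    rw [e1, e2, e3]
    rw [← sub_eq_zero]
    abel_nf
    simp only [two_zsmul, hcup2, add_zero, zero_add]
  · intro x
    obtain ⟨s, y⟩ := x
    simp only [eDiffTw, eBoxplus, Prod.mk.injEq, Prod.mk_eq_zero]
    refine ⟨?_, hdY2 _ _ _ _ _ _⟩
    have hν2 : dY (q + 1) (q + 1 + 1) rfl ν = 0 :=
      dYZeroCastAux dY (by ring) _ _ ν hν
    simp only [map_add, hsteenrod, hdS2, hdY2, cup0l, cup0r, hcupl, hcupr, zero_add, add_zero,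
      hν2]
    have hn1 : cup (0 - 1) (p - q) (q + 1) (p + 2) (by omega) y ν = 0 :=
      hcupneg _ _ _ _ _ _ _ (by omega)
    have hn2 : cup (0 - 1) (q + 1) (p - q) (p + 2) (by omega) ν y = 0 :=
      hcupneg _ _ _ _ _ _ _ (by omega)
    have e1 : cup (p + 1 - 2 * q - 1) (p + 1 - q) (p + 1 - q) (p + 2) (by omega)
        (dY (p - q) (p + 1 - q) (by omega) y) (dY (p - q) (p + 1 - q) (by omega) y)
        = cup (p - 2 * q) (p - q + 1) (p - q + 1) (p + 2) (by omega)
        (dY (p - q) (p - q + 1) rfl y) (dY (p - q) (p - q + 1) rfl y) :=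
      cupCastAux cup (by ring) (by ring) (by ring) _ _ _ _ _ _
        (dYCastAux dY (by ring) _ _ _) (dYCastAux dY (by ring) _ _ _)
    have e2 : cup 0 (p + 1 - q) (q + 1) (p + 2) (by omega)
        (dY (p - q) (p + 1 - q) (by omega) y) ν
        = cup 0 (p - q + 1) (q + 1) (p + 2) (by omega)
        (dY (p - q) (p - q + 1) rfl y) ν :=
      cupCastAux cup rfl (by ring) rfl _ _ _ _ _ _
        (dYCastAux dY (by ring) _ _ _) HEq.rfl
    rw [hn1, hn2, e1, e2]
    abel_nf
    simp only [two_zsmul, hcup2, add_zero, zero_add]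
  · intro z hz r
    obtain ⟨s, y⟩ := z
    obtain ⟨t, w⟩ := r
    rw [Prod.ext_iff] at hz
    simp only [eDiffTw, Prod.snd_zero] at hz
    have hzy : dY (p - q) (p - q + 1) rfl y = 0 :=
      dYZeroCastAux dY (by ring) _ _ y hz.2
    refine ⟨⟨t + cup (p - 2 * q + 1) (p - q) (p - q) (p - 1) (by omega) y
        (dY (p - 1 - q) (p - q) (by omega) w), w⟩, ?_⟩
    simp only [eDiffTw, eBoxplus, Prod.mk.injEq]
    refine ⟨?_, add_comm _ _⟩
    simp only [map_add, hsteenrod, hdY2, hzy, cup0l, cup0r, hcupl, hcupr, zero_add, add_zero]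
    have e1 : cup (p - 2 * q + 1 - 1) (p - q) (p - q) p (by omega)
        y (dY (p - 1 - q) (p - q) (by omega) w)
        = cup (p - 2 * q) (p - q) (p - q) p (by omega)
        y (dY (p - 1 - q) (p - q) (by omega) w) :=
      cupCastAux cup (by ring) rfl rfl _ _ _ _ _ _ HEq.rfl HEq.rfl
    have e2 : cup (p - 2 * q + 1 - 1) (p - q) (p - q) p (by omega)
        (dY (p - 1 - q) (p - q) (by omega) w) y
        = cup (p - 2 * q) (p - q) (p - q) p (by omega)
        (dY (p - 1 - q) (p - q) (by omega) w) y :=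
      cupCastAux cup (by ring) rfl rfl _ _ _ _ _ _ HEq.rfl HEq.rfl
    rw [e1, e2]
    rw [← sub_eq_zero]
    abel_nf
    rw [neg_smul, two_zsmul, hcup2, neg_zero]
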